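/- If a graph H is a minor of a graph G, then gd(H) ≤ gd(G). In particular, the graph parameter gd is monotone nondecreasing under edge deletion and edge contraction. -/

import Mathlib

open Matrix Finset

/-- The Gram dimension of a graph `G`: the smallest integer `k ≥ 1` such that every
positive semidefinite matrix indexed by the vertices admits a positive semidefinite
matrix of rank at most `k` agreeing with it on the diagonal and on the edges of `G`. -/
noncomputable def gd {V : Type} [Fintype V] (G : SimpleGraph V) : ℕ :=
  sInf {k : ℕ | 1 ≤ k ∧ ∀ X : Matrix V V ℝ, X.PosSemidef →
    ∃ Y : Matrix V V ℝ, Y.PosSemidef ∧ Y.rank ≤ k ∧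
      (∀ i, Y i i = X i i) ∧ (∀ i j, G.Adj i j → Y i j = X i j)}

/-- `H` is a minor of `G`: there exist pairwise disjoint nonempty connected branch sets
in `G`, one for each vertex of `H`, with an edge of `G` between the branch sets of any
two adjacent vertices of `H`. -/
def IsMinorOf {U V : Type} (H : SimpleGraph U) (G : SimpleGraph V) : Prop :=
  ∃ B : U → Set V,
    (∀ u, (B u).Nonempty) ∧
    (∀ u, (G.induce (B u)).Connected) ∧
    (∀ u u', u ≠ u' → Disjoint (B u) (B u')) ∧
    (∀ u u', H.Adj u u' → ∃ x ∈ B u, ∃ y ∈ B u', G.Adj x y)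

/-- The graph obtained from `G` by contracting the edge `(a, b)` (identifying `b` with `a`). -/
def contractEdge {V : Type} [DecidableEq V] (G : SimpleGraph V) (a b : V) :
    SimpleGraph {v : V // v ≠ b} where
  Adj u w := u ≠ w ∧
    (G.Adj u.1 w.1 ∨ (u.1 = a ∧ G.Adj w.1 b) ∨ (w.1 = a ∧ G.Adj u.1 b))
  symm := by
    refine ⟨?_⟩
    rintro u w ⟨h1, h2⟩
    refine ⟨fun e => h1 e.symm, ?_⟩
    rcases h2 with h | ⟨h3, h4⟩ | ⟨h3, h4⟩
    · exact Or.inl h.symm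
    · exact Or.inr (Or.inr ⟨h3, h4⟩)
    · exact Or.inr (Or.inl ⟨h3, h4⟩)
  loopless := ⟨by rintro u ⟨h1, -⟩; exact h1 rfl⟩

/-!
Let `B u ⊆ V` be the branch sets of `H` in `G` and `P` the `0/1` matrix of the relation
`v ∈ B u`. A positive semidefinite `X` on `H` blows up to `Pᵀ X P` on `G`, which repeats the
row and column of `u` on all of `B u`. Complete it on `G` with rank at most `gd G`. Along an
edge `xy` inside a branch set the completion `Y` has `Y x x = Y y y = Y x y`, so
`(e_x - e_y)ᵀ Y (e_x - e_y) = 0` and the columns `x`, `y` of `Y` agree; by connectivity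
`Y` is constant on each block `B u × B u'`. Restricting `Y` to one representative per branch
set gives a completion of `X` on `H` of rank at most `gd G`. Edge deletions and contractions
are minors.
-/

namespace SimpleGraph

variable {W β : Type*} {G : SimpleGraph W}

theorem Preconnected.apply_eq_of_forall_adj (hG : G.Preconnected) {f : W → β}
    (hf : ∀ x y, G.Adj x y → f x = f y) (x y : W) : f x = f y := by
  obtain ⟨p⟩ := hG x y
  induction p with
  | nil => rfl
  | cons h _ ih => exact (hf _ _ h).trans ih

end SimpleGraph

namespace Matrix

variable {n : Type*} [Fintype n]

theorem PosSemidef.apply_eq_of_apply_eq {Y : Matrix n n ℝ} (hY : Y.PosSemidef) {x y : n}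
    (hxy : Y x y = Y x x) (hyy : Y y y = Y x x) (i : n) : Y i x = Y i y := by
  classical
  set d : n → ℝ := Pi.single x 1 - Pi.single y 1
  have hyx : Y y x = Y x x := by rw [← hxy]; exact hY.isHermitian.apply x y
  have hquad : star d ⬝ᵥ Y *ᵥ d = 0 := by
    simp [d, mulVec_sub, sub_dotProduct, dotProduct_sub, hxy, hyy, hyx]
  have hker := congrFun ((hY.dotProduct_mulVec_zero_iff d).mp hquad) i
  simpa [d, mulVec_sub, mulVec_single_one, sub_eq_zero] using hker

end Matrix

section BranchSets

open Function

variable {U V : Type*} {B : U → Set V}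

noncomputable def branchMatrix (B : U → Set V) : Matrix U V ℝ :=
  Matrix.of fun u v => (B u).indicator 1 v

theorem branchMatrix_apply_of_mem [DecidableEq U] (hB : Pairwise (Disjoint on B)) {u : U} {v : V}
    (hv : v ∈ B u) (u' : U) : branchMatrix B u' v = (Pi.single u 1 : U → ℝ) u' := by
  by_cases h : u' = u
  · subst h; simp [branchMatrix, hv]
  · have : v ∉ B u' := fun hv' => Set.disjoint_left.mp (hB h) hv' hv
    simp [branchMatrix, this, h]

theorem transpose_branchMatrix_mul_mul_apply [Fintype U] [Fintype V]
    (hB : Pairwise (Disjoint on B)) (X : Matrix U U ℝ) {u u' : U} {v w : V}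
    (hv : v ∈ B u) (hw : w ∈ B u') :
    ((branchMatrix B)ᵀ * X * branchMatrix B) v w = X u u' := by
  classical
  simp [Matrix.mul_apply, branchMatrix_apply_of_mem hB hv, branchMatrix_apply_of_mem hB hw,
    Pi.single_apply]

end BranchSets

section GramDimension

variable {U V : Type} [Fintype U] [Fintype V]

def LowRankCompletable (G : SimpleGraph V) (k : ℕ) : Prop :=
  ∀ X : Matrix V V ℝ, X.PosSemidef →
    ∃ Y : Matrix V V ℝ, Y.PosSemidef ∧ Y.rank ≤ k ∧
      (∀ i, Y i i = X i i) ∧ (∀ i j, G.Adj i j → Y i j = X i j)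

theorem one_le_gd_and_lowRankCompletable (G : SimpleGraph V) :
    1 ≤ gd G ∧ LowRankCompletable G (gd G) :=
  Nat.sInf_mem (s := {k | 1 ≤ k ∧ LowRankCompletable G k})
    ⟨max 1 (Fintype.card V), le_max_left _ _, fun X hX =>
      ⟨X, hX, X.rank_le_card_width.trans (le_max_right _ _), fun _ => rfl, fun _ _ _ => rfl⟩⟩

theorem gd_le_of_lowRankCompletable {G : SimpleGraph V} {k : ℕ} (hk : 1 ≤ k)
    (h : LowRankCompletable G k) : gd G ≤ k :=
  Nat.sInf_le ⟨hk, h⟩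

theorem gd_le_of_isMinorOf {H : SimpleGraph U} {G : SimpleGraph V} (hHG : IsMinorOf H G) :
    gd H ≤ gd G := by
  obtain ⟨B, hne, hconn, hdisj, hedge⟩ := hHG
  obtain ⟨hgd, hcompl⟩ := one_le_gd_and_lowRankCompletable G
  refine gd_le_of_lowRankCompletable hgd fun X hX => ?_
  set Z := (branchMatrix B)ᵀ * X * branchMatrix B
  have hZ : ∀ {u u' v w}, v ∈ B u → w ∈ B u' → Z v w = X u u' :=
    transpose_branchMatrix_mul_mul_apply hdisj X
  obtain ⟨Y, hY, hrank, hdiag, hadj⟩ := hcompl Z (hX.conjTranspose_mul_mul_same _)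
  have hcol : ∀ u, ∀ x ∈ B u, ∀ y ∈ B u, ∀ i, Y i x = Y i y := by
    intro u x hx y hy i
    refine (hconn u).preconnected.apply_eq_of_forall_adj (f := fun s => Y i s.1)
      (fun s t hst => hY.apply_eq_of_apply_eq ?_ ?_ i) ⟨x, hx⟩ ⟨y, hy⟩
    · rw [hadj s.1 t.1 hst, hdiag, hZ s.2 t.2, hZ s.2 s.2]
    · rw [hdiag, hdiag, hZ t.2 t.2, hZ s.2 s.2]
  choose r hr using hne
  have hsymm : ∀ i j, Y i j = Y j i := fun i j => by simpa using hY.isHermitian.apply j i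
  have hYr : ∀ {u u' x y}, x ∈ B u → y ∈ B u' → Y (r u) (r u') = Y x y := by
    intro u u' x y hx hy
    rw [hcol u' _ (hr u') y hy, hsymm, hcol u _ (hr u) x hx, hsymm]
  refine ⟨Y.submatrix r r, hY.submatrix r, (Y.rank_submatrix_le r r).trans hrank,
    fun u => ?_, fun u u' huu' => ?_⟩
  · rw [submatrix_apply, hdiag, hZ (hr u) (hr u)]
  · obtain ⟨x, hx, y, hy, hxy⟩ := hedge u u' huu'
    rw [submatrix_apply, hYr hx hy, hadj x y hxy, hZ hx hy]

end GramDimension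

section Minors

variable {V : Type}

theorem isMinorOf_of_le {H G : SimpleGraph V} (hHG : H ≤ G) : IsMinorOf H G :=
  ⟨fun v => {v}, fun v => Set.singleton_nonempty v, fun v => by simp,
    fun _ _ h => Set.disjoint_singleton.mpr h, fun v w h => ⟨v, rfl, w, rfl, hHG h⟩⟩

theorem isMinorOf_contractEdge [DecidableEq V] {G : SimpleGraph V} {a b : V} (hab : G.Adj a b) :
    IsMinorOf (contractEdge G a b) G := by
  let B : {v : V // v ≠ b} → Set V := fun u => if u.1 = a then {a, b} else {u.1}
  have hmem : ∀ u x, x ∈ B u ↔ x = u.1 ∨ (u.1 = a ∧ x = b) := by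
    intro u x
    by_cases h : u.1 = a <;> simp [B, h]
  refine ⟨B, fun u => ⟨u.1, (hmem u u).2 (Or.inl rfl)⟩, fun u => ?_,
    fun u u' huu' => ?_, ?_⟩
  · by_cases h : u.1 = a
    · rw [show B u = {a, b} from if_pos h]
      exact SimpleGraph.induce_pair_connected_of_adj hab
    · rw [show B u = {u.1} from if_neg h]
      simp
  · refine Set.disjoint_left.mpr fun x hx hx' => huu' (Subtype.ext ?_)
    rw [hmem] at hx hx'
    grind
  · rintro u u' ⟨-, hadj | ⟨h, hb⟩ | ⟨h, hb⟩⟩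
    · exact ⟨u.1, (hmem u u).2 (Or.inl rfl), u'.1, (hmem u' u').2 (Or.inl rfl), hadj⟩
    · exact ⟨b, (hmem u b).2 (Or.inr ⟨h, rfl⟩), u'.1, (hmem u' u').2 (Or.inl rfl), hb.symm⟩
    · exact ⟨u.1, (hmem u u).2 (Or.inl rfl), b, (hmem u' b).2 (Or.inr ⟨h, rfl⟩), hb⟩

end Minors

theorem gd_minor_monotone :
    (∀ {U V : Type} [Fintype U] [Fintype V] (H : SimpleGraph U) (G : SimpleGraph V),
        IsMinorOf H G → gd H ≤ gd G) ∧
    (∀ {V : Type} [Fintype V] (G : SimpleGraph V) (s : Set (Sym2 V)),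
        gd (G.deleteEdges s) ≤ gd G) ∧
    (∀ {V : Type} [Fintype V] [DecidableEq V] (G : SimpleGraph V) (a b : V),
        G.Adj a b → gd (contractEdge G a b) ≤ gd G) :=
  ⟨fun _ _ => gd_le_of_isMinorOf,
    fun G s => gd_le_of_isMinorOf (isMinorOf_of_le (G.deleteEdges_le s)),
    fun _ _ _ hab => gd_le_of_isMinorOf (isMinorOf_contractEdge hab)⟩
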